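/- (Spectral Chernoff bound, lower tail.) Under the same setup, for 0 ≤ δ ≤ 1, Pr[X ≤ (1−δ)μt] ≤ c‖φ‖_π exp(−δ²(1−λ)μt/36) for some absolute constant c. -/

import Mathlib

open Finset Matrix

/-- Row-stochastic matrix. -/
def IsStochastic {n : ℕ} (M : Matrix (Fin n) (Fin n) ℝ) : Prop :=
  (∀ i j, 0 ≤ M i j) ∧ ∀ i, ∑ j, M i j = 1

/-- Probability distribution on `Fin n`. -/
def IsDist {n : ℕ} (x : Fin n → ℝ) : Prop :=
  (∀ i, 0 ≤ x i) ∧ ∑ i, x i = 1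

/-- Total variation distance. -/
noncomputable def tvDist {n : ℕ} (u w : Fin n → ℝ) : ℝ :=
  (1 / 2) * ∑ i, |u i - w i|

/-- Inner product under the π-kernel. -/
noncomputable def piInner {n : ℕ} (π u v : Fin n → ℝ) : ℝ :=
  ∑ i, u i * v i / π i

/-- π-norm. -/
noncomputable def piNorm {n : ℕ} (π u : Fin n → ℝ) : ℝ :=
  Real.sqrt (∑ i, (u i) ^ 2 / π i)

/-- Component of `x` parallel to `π` (in the π-inner product). -/
noncomputable def parComp {n : ℕ} (π x : Fin n → ℝ) : Fin n → ℝ :=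
  fun i => piInner π x π * π i

/-- Component of `x` perpendicular to `π` (in the π-inner product). -/
noncomputable def perpComp {n : ℕ} (π x : Fin n → ℝ) : Fin n → ℝ :=
  fun i => x i - parComp π x i

/-- Spectral expansion of a Markov chain with stationary distribution π. -/
noncomputable def specExp {n : ℕ} (π : Fin n → ℝ) (M : Matrix (Fin n) (Fin n) ℝ) : ℝ :=
  sSup {r : ℝ | ∃ x : Fin n → ℝ, x ≠ 0 ∧ piInner π x π = 0 ∧
    r = piNorm π (x ᵥ* M) / piNorm π x}

/-- Probability that a Markov chain walk started from distribution `φ` with transition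
matrix `M` follows the trajectory `v` (a walk of `t + 1` steps). -/
noncomputable def walkProb {n t : ℕ} (φ : Fin n → ℝ) (M : Matrix (Fin n) (Fin n) ℝ)
    (v : Fin (t + 1) → Fin n) : ℝ :=
  φ (v 0) * ∏ i : Fin t, M (v i.castSucc) (v i.succ)

open scoped Classical

open Real (exp)

/-!
Chernoff's method: by Markov's inequality it suffices to bound `E[exp (-r X)]` for
`r = δ (1 - λ) / 6`. This expectation is the total mass of the row vector
`u_t = φ D₀ M D₁ ⋯ M D_t` with `D_i = diag (exp (-r f_i))`. Write `a_k = ∑ u_k` and let `b_k`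
be the π-norm of the part of `u_k` orthogonal to `π`. Since `M` contracts that part by `λ` and
`‖π (1 - exp (-r f_i))‖_π ≤ ν := r √μ`, one step bounds the new pair by
`(E_π[exp (-r f)] a + λ ν b, ν a + λ b)`, so the potential `a + γ b` with `γ = δ √μ / 4`
shrinks by the factor `exp (-r μ (1 - 2δ/3))` per step. Against the Markov factor
`exp (r (1 - δ) μ (t + 1))` this leaves `exp (-δ² (1 - λ) μ (t + 1) / 18)`, up to a constant.
-/

section PiGeometry

variable {n : ℕ} {π : Fin n → ℝ}

/-- Division by `√π` identifies the π-norm with the Euclidean norm. -/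
noncomputable def toL2 (π : Fin n → ℝ) : (Fin n → ℝ) →ₗ[ℝ] EuclideanSpace ℝ (Fin n) where
  toFun u := WithLp.toLp 2 fun i => u i / √(π i)
  map_add' u v := by ext i; simp [add_div]
  map_smul' a u := by ext i; simp [mul_div_assoc]

lemma piNorm_eq_norm_toL2 (hπ : ∀ i, 0 ≤ π i) (u : Fin n → ℝ) :
    piNorm π u = ‖toL2 π u‖ := by
  simp [piNorm, toL2, EuclideanSpace.norm_eq, div_pow, Real.sq_sqrt (hπ _)]

lemma piInner_eq_inner_toL2 (hπ : ∀ i, 0 ≤ π i) (u v : Fin n → ℝ) :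
    piInner π u v = inner ℝ (toL2 π u) (toL2 π v) := by
  simp only [piInner, toL2, LinearMap.coe_mk, AddHom.coe_mk, EuclideanSpace.inner_toLp_toLp,
    dotProduct, star_trivial]
  refine Finset.sum_congr rfl fun i _ => ?_
  rw [div_mul_div_comm, ← sq, Real.sq_sqrt (hπ i), mul_comm]

lemma piNorm_nonneg (u : Fin n → ℝ) : 0 ≤ piNorm π u := Real.sqrt_nonneg _

lemma piNorm_add_le (hπ : ∀ i, 0 ≤ π i) (u v : Fin n → ℝ) :
    piNorm π (u + v) ≤ piNorm π u + piNorm π v := by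
  simp only [piNorm_eq_norm_toL2 hπ, map_add, norm_add_le]

lemma piNorm_smul (hπ : ∀ i, 0 ≤ π i) (a : ℝ) (u : Fin n → ℝ) :
    piNorm π (a • u) = |a| * piNorm π u := by
  simp only [piNorm_eq_norm_toL2 hπ, map_smul, norm_smul, Real.norm_eq_abs]

lemma piNorm_neg (hπ : ∀ i, 0 ≤ π i) (u : Fin n → ℝ) : piNorm π (-u) = piNorm π u := by
  simp only [piNorm_eq_norm_toL2 hπ, map_neg, norm_neg]

lemma abs_piInner_le (hπ : ∀ i, 0 ≤ π i) (u v : Fin n → ℝ) :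
    |piInner π u v| ≤ piNorm π u * piNorm π v := by
  rw [piInner_eq_inner_toL2 hπ, piNorm_eq_norm_toL2 hπ, piNorm_eq_norm_toL2 hπ]
  exact abs_real_inner_le_norm _ _

lemma piNorm_pos (hπ : ∀ i, 0 < π i) {u : Fin n → ℝ} (hu : u ≠ 0) : 0 < piNorm π u := by
  rw [piNorm_eq_norm_toL2 fun i => (hπ i).le, norm_pos_iff]
  contrapose! hu
  ext i
  have := congrArg (fun x : EuclideanSpace ℝ (Fin n) => x i) hu
  simpa [toL2, (Real.sqrt_pos.2 (hπ i)).ne'] using this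

lemma piInner_right_eq_sum (hπ : ∀ i, 0 < π i) (u : Fin n → ℝ) :
    piInner π u π = ∑ i, u i :=
  Finset.sum_congr rfl fun i _ => mul_div_cancel_right₀ _ (hπ i).ne'

lemma piInner_mul_right (hπ : ∀ i, 0 < π i) (u g : Fin n → ℝ) :
    piInner π u (π * g) = ∑ i, u i * g i :=
  Finset.sum_congr rfl fun i _ => by
    simp only [Pi.mul_apply]; field_simp [(hπ i).ne']

lemma piNorm_self (hπ : ∀ i, 0 < π i) (hπd : IsDist π) : piNorm π π = 1 := by
  simp [piNorm, sq, mul_div_cancel_right₀ _ (hπ _).ne', hπd.2]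

lemma piNorm_mul_le_of_abs_le (hπ : ∀ i, 0 ≤ π i) (u : Fin n → ℝ) {E : Fin n → ℝ}
    (hE : ∀ j, |E j| ≤ 1) : piNorm π (u * E) ≤ piNorm π u := by
  refine Real.sqrt_le_sqrt (Finset.sum_le_sum fun j _ => ?_)
  refine div_le_div_of_nonneg_right ?_ (hπ j)
  rw [Pi.mul_apply, mul_pow]
  exact mul_le_of_le_one_right (sq_nonneg _) ((sq_le_one_iff_abs_le_one _).2 (hE j))

lemma one_le_piNorm (hπ : ∀ i, 0 < π i) (hπd : IsDist π) {φ : Fin n → ℝ} (hφ : IsDist φ) :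
    1 ≤ piNorm π φ := by
  have h := abs_piInner_le (fun i => (hπ i).le) φ π
  rwa [piInner_right_eq_sum hπ, hφ.2, abs_one, piNorm_self hπ hπd, mul_one] at h

end PiGeometry

section Projection

variable {n : ℕ} {π : Fin n → ℝ}

lemma perpComp_eq (hπ : ∀ i, 0 < π i) (u : Fin n → ℝ) :
    perpComp π u = u - (∑ i, u i) • π := by
  ext j
  simp [perpComp, parComp, piInner_right_eq_sum hπ]

lemma perpComp_add (u v : Fin n → ℝ) :
    perpComp π (u + v) = perpComp π u + perpComp π v := by
  ext j
  simp only [perpComp, parComp, piInner, Pi.add_apply, add_mul, add_div, Finset.sum_add_distrib]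
  ring

lemma perpComp_smul (a : ℝ) (u : Fin n → ℝ) :
    perpComp π (a • u) = a • perpComp π u := by
  ext j
  simp only [perpComp, parComp, piInner, Pi.smul_apply, smul_eq_mul, mul_assoc, mul_div_assoc,
    ← Finset.mul_sum]
  ring

lemma sum_perpComp (hπ : ∀ i, 0 < π i) (hπd : IsDist π) (u : Fin n → ℝ) :
    ∑ j, perpComp π u j = 0 := by
  simp [perpComp_eq hπ, Finset.sum_sub_distrib, ← Finset.mul_sum, hπd.2]

/-- `perpComp` is the π-orthogonal projection away from `π`, so `‖u‖² = ‖u^⊥‖² + (∑ u)²`. -/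
lemma piNorm_perpComp_le (hπ : ∀ i, 0 < π i) (hπd : IsDist π) (u : Fin n → ℝ) :
    piNorm π (perpComp π u) ≤ piNorm π u := by
  have hπ0 : ∀ i, 0 ≤ π i := fun i => (hπ i).le
  have h := norm_sub_sq_real (toL2 π u) (toL2 π ((∑ i, u i) • π))
  rw [← map_sub, ← perpComp_eq hπ, ← piInner_eq_inner_toL2 hπ0, ← piNorm_eq_norm_toL2 hπ0,
    ← piNorm_eq_norm_toL2 hπ0, ← piNorm_eq_norm_toL2 hπ0, piNorm_smul hπ0, piNorm_self hπ hπd,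
    mul_one, sq_abs] at h
  have hinner : piInner π u ((∑ i, u i) • π) = (∑ i, u i) ^ 2 := by
    rw [piInner_eq_inner_toL2 hπ0, map_smul, inner_smul_right, ← piInner_eq_inner_toL2 hπ0,
      piInner_right_eq_sum hπ, sq]
  rw [← pow_le_pow_iff_left₀ (piNorm_nonneg _) (piNorm_nonneg _) two_ne_zero, h, hinner]
  linarith [sq_nonneg (∑ i, u i)]

/-- `π * E = π - π * (1 - E)`, and the projection kills `π`. -/
lemma piNorm_perpComp_mul_le (hπ : ∀ i, 0 < π i) (hπd : IsDist π) (E : Fin n → ℝ) :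
    piNorm π (perpComp π (π * E)) ≤ piNorm π (π * (1 - E)) := by
  have h : perpComp π (π * E) = -perpComp π (π * (1 - E)) := by
    ext j
    simp only [perpComp_eq hπ, Pi.mul_apply, Pi.sub_apply, Pi.smul_apply, Pi.neg_apply,
      smul_eq_mul, mul_sub, mul_one, Finset.sum_sub_distrib, hπd.2, neg_sub]
    ring
  rw [h, piNorm_neg fun i => (hπ i).le]
  exact piNorm_perpComp_le hπ hπd _

end Projection

section MarkovOperator

variable {n : ℕ} {π : Fin n → ℝ} {M : Matrix (Fin n) (Fin n) ℝ}

lemma sum_vecMul (hM : IsStochastic M) (u : Fin n → ℝ) : ∑ j, (u ᵥ* M) j = ∑ i, u i := by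
  simp only [vecMul, dotProduct]
  rw [Finset.sum_comm]
  simp [← Finset.mul_sum, hM.2]

/-- Cauchy–Schwarz in each column, weighted by the stationary flow `π i * M i j`. -/
lemma piNorm_vecMul_le (hM : IsStochastic M) (hπ : ∀ i, 0 < π i) (hπM : π ᵥ* M = π)
    (u : Fin n → ℝ) : piNorm π (u ᵥ* M) ≤ piNorm π u := by
  refine Real.sqrt_le_sqrt ?_
  have hcol : ∀ j, (u ᵥ* M) j ^ 2 / π j ≤ ∑ i, u i ^ 2 / π i * M i j := by
    intro j
    have hπj : ∑ i, π i * M i j = π j := congrFun hπM j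
    rw [div_le_iff₀ (hπ j), ← hπj]
    show (∑ i, u i * M i j) ^ 2 ≤ _
    refine Finset.sum_sq_le_sum_mul_sum_of_sq_le_mul _
      (fun i _ => mul_nonneg (div_nonneg (sq_nonneg _) (hπ i).le) (hM.1 i j))
      (fun i _ => mul_nonneg (hπ i).le (hM.1 i j)) (fun i _ => le_of_eq ?_)
    field_simp [(hπ i).ne']
  calc ∑ j, (u ᵥ* M) j ^ 2 / π j ≤ ∑ j, ∑ i, u i ^ 2 / π i * M i j :=
        Finset.sum_le_sum fun j _ => hcol j
    _ = ∑ i, u i ^ 2 / π i := by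
        rw [Finset.sum_comm]
        simp [← Finset.mul_sum, hM.2]

lemma specExp_nonneg : 0 ≤ specExp π M :=
  Real.sSup_nonneg <| by
    rintro _ ⟨x, -, -, rfl⟩
    exact div_nonneg (piNorm_nonneg _) (piNorm_nonneg _)

lemma piNorm_vecMul_le_specExp_mul (hM : IsStochastic M) (hπ : ∀ i, 0 < π i)
    (hπM : π ᵥ* M = π) {w : Fin n → ℝ} (hw : ∑ i, w i = 0) :
    piNorm π (w ᵥ* M) ≤ specExp π M * piNorm π w := by
  rcases eq_or_ne w 0 with rfl | hw0
  · simp [piNorm]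
  have hbdd : BddAbove {r : ℝ | ∃ x : Fin n → ℝ, x ≠ 0 ∧ piInner π x π = 0 ∧
      r = piNorm π (x ᵥ* M) / piNorm π x} := by
    refine ⟨1, ?_⟩
    rintro _ ⟨x, hx, -, rfl⟩
    exact div_le_one_of_le₀ (piNorm_vecMul_le hM hπ hπM x) (piNorm_nonneg _)
  rw [← div_le_iff₀ (piNorm_pos hπ hw0)]
  exact le_csSup hbdd ⟨w, hw0, by rw [piInner_right_eq_sum hπ, hw], rfl⟩

lemma vecMul_eq_smul_add_perpComp (hπ : ∀ i, 0 < π i) (hπM : π ᵥ* M = π) (u : Fin n → ℝ) :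
    u ᵥ* M = (∑ i, u i) • π + perpComp π u ᵥ* M := by
  rw [perpComp_eq hπ, sub_vecMul, smul_vecMul, hπM, add_sub_cancel]

end MarkovOperator

section TiltedStep

variable {n : ℕ} {π : Fin n → ℝ} {M : Matrix (Fin n) (Fin n) ℝ}

lemma abs_sum_vecMul_mul_le (hM : IsStochastic M) (hπd : IsDist π) (hπ : ∀ i, 0 < π i)
    (hπM : π ᵥ* M = π) (u : Fin n → ℝ) {E : Fin n → ℝ} (hE : ∀ j, 0 ≤ E j) {ν m : ℝ}
    (hν : piNorm π (π * (1 - E)) ≤ ν) (hm : ∑ j, π j * E j ≤ m) :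
    |∑ j, (u ᵥ* M * E) j| ≤ m * |∑ i, u i| + specExp π M * ν * piNorm π (perpComp π u) := by
  set z := perpComp π u ᵥ* M
  have hz : ∑ j, z j = 0 := by rw [sum_vecMul hM, sum_perpComp hπ hπd]
  have hsplit : ∑ j, (u ᵥ* M * E) j
      = (∑ i, u i) * ∑ j, π j * E j - piInner π z (π * (1 - E)) := by
    rw [piInner_mul_right hπ, vecMul_eq_smul_add_perpComp hπ hπM u]
    simp only [Pi.mul_apply, Pi.add_apply, Pi.smul_apply, Pi.sub_apply, Pi.one_apply, smul_eq_mul,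
      add_mul, mul_sub, mul_one, Finset.sum_add_distrib, Finset.sum_sub_distrib, hz, Finset.mul_sum,
      mul_assoc]
    ring
  have hm0 : 0 ≤ ∑ j, π j * E j := Finset.sum_nonneg fun j _ => mul_nonneg (hπ j).le (hE j)
  have hz_le : |piInner π z (π * (1 - E))| ≤ specExp π M * piNorm π (perpComp π u) * ν :=
    (abs_piInner_le (fun i => (hπ i).le) _ _).trans <|
      mul_le_mul (piNorm_vecMul_le_specExp_mul hM hπ hπM (sum_perpComp hπ hπd u)) hν
        (piNorm_nonneg _) (mul_nonneg specExp_nonneg (piNorm_nonneg _))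
  calc |∑ j, (u ᵥ* M * E) j|
      ≤ |∑ i, u i| * ∑ j, π j * E j + |piInner π z (π * (1 - E))| := by
        rw [hsplit, ← abs_of_nonneg hm0, ← abs_mul, abs_of_nonneg hm0]
        exact abs_sub _ _
    _ ≤ |∑ i, u i| * m + specExp π M * piNorm π (perpComp π u) * ν := by gcongr
    _ = _ := by ring

lemma piNorm_perpComp_vecMul_mul_le (hM : IsStochastic M) (hπd : IsDist π) (hπ : ∀ i, 0 < π i)
    (hπM : π ᵥ* M = π) (u : Fin n → ℝ) {E : Fin n → ℝ} (hE : ∀ j, |E j| ≤ 1) {ν : ℝ}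
    (hν : piNorm π (π * (1 - E)) ≤ ν) :
    piNorm π (perpComp π (u ᵥ* M * E))
      ≤ ν * |∑ i, u i| + specExp π M * piNorm π (perpComp π u) := by
  have hπ0 : ∀ i, 0 ≤ π i := fun i => (hπ i).le
  have hsplit : u ᵥ* M * E = (∑ i, u i) • (π * E) + perpComp π u ᵥ* M * E := by
    rw [vecMul_eq_smul_add_perpComp hπ hπM u, add_mul, smul_mul_assoc]
  rw [hsplit, perpComp_add, perpComp_smul]
  calc _ ≤ |∑ i, u i| * piNorm π (perpComp π (π * E))
        + piNorm π (perpComp π (perpComp π u ᵥ* M * E)) :=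
        (piNorm_add_le hπ0 _ _).trans_eq (by rw [piNorm_smul hπ0])
    _ ≤ |∑ i, u i| * ν + specExp π M * piNorm π (perpComp π u) := by
        gcongr
        · exact (piNorm_perpComp_mul_le hπ hπd E).trans hν
        · exact (piNorm_perpComp_le hπ hπd _).trans <| (piNorm_mul_le_of_abs_le hπ0 _ hE).trans <|
            piNorm_vecMul_le_specExp_mul hM hπ hπM (sum_perpComp hπ hπd u)
    _ = _ := by ring

end TiltedStep

lemma add_mul_le_pow_mul {a b : ℕ → ℝ} {m ν ρ γ B : ℝ} (ha : ∀ k, 0 ≤ a k) (hb : ∀ k, 0 ≤ b k)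
    (hγ : 0 ≤ γ) (hB : 0 ≤ B) (hmB : m + γ * ν ≤ B) (hρB : ρ * (ν + γ) ≤ B * γ)
    (ha_succ : ∀ k, a (k + 1) ≤ m * a k + ρ * ν * b k)
    (hb_succ : ∀ k, b (k + 1) ≤ ν * a k + ρ * b k) (k : ℕ) :
    a k + γ * b k ≤ B ^ k * (a 0 + γ * b 0) := by
  induction k with
  | zero => simp
  | succ k ih =>
    calc a (k + 1) + γ * b (k + 1)
        ≤ (m * a k + ρ * ν * b k) + γ * (ν * a k + ρ * b k) :=
          add_le_add (ha_succ k) (mul_le_mul_of_nonneg_left (hb_succ k) hγ)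
      _ = (m + γ * ν) * a k + ρ * (ν + γ) * b k := by ring
      _ ≤ B * a k + B * γ * b k := by gcongr <;> first | exact ha k | exact hb k
      _ = B * (a k + γ * b k) := by ring
      _ ≤ B * (B ^ k * (a 0 + γ * b 0)) := mul_le_mul_of_nonneg_left ih hB
      _ = B ^ (k + 1) * (a 0 + γ * b 0) := by ring

section TiltedWalk

variable {n : ℕ} {π : Fin n → ℝ} {M : Matrix (Fin n) (Fin n) ℝ}

/-- The row vector `φ D₀ M D₁ ⋯ M Dₖ`, where `Dₖ = diag (E k)`. -/
noncomputable def tiltedVec (M : Matrix (Fin n) (Fin n) ℝ) (φ : Fin n → ℝ) (E : ℕ → Fin n → ℝ) :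
    ℕ → Fin n → ℝ
  | 0 => φ * E 0
  | k + 1 => tiltedVec M φ E k ᵥ* M * E (k + 1)

lemma walkProb_snoc {t : ℕ} (φ : Fin n → ℝ) (M : Matrix (Fin n) (Fin n) ℝ)
    (w : Fin (t + 1) → Fin n) (j : Fin n) :
    walkProb φ M (Fin.snoc w j : Fin (t + 2) → Fin n) = walkProb φ M w * M (w (Fin.last t)) j := by
  simp only [walkProb, Fin.prod_univ_castSucc (n := t), Fin.succ_castSucc, Fin.succ_last,
    Fin.snoc_castSucc, Fin.snoc_last, mul_assoc]
  rw [show (0 : Fin (t + 2)) = Fin.castSucc 0 from rfl, Fin.snoc_castSucc]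

lemma sum_walkProb_mul_prod_mul (M : Matrix (Fin n) (Fin n) ℝ) (φ : Fin n → ℝ)
    (E : ℕ → Fin n → ℝ) (t : ℕ) (g : Fin n → ℝ) :
    ∑ v : Fin (t + 1) → Fin n, walkProb φ M v * (∏ i : Fin (t + 1), E i (v i)) * g (v (Fin.last t))
      = ∑ j, tiltedVec M φ E t j * g j := by
  induction t generalizing g with
  | zero =>
    rw [← (Equiv.funUnique (Fin 1) (Fin n)).symm.sum_comp]
    simp [tiltedVec, walkProb, mul_assoc]
  | succ t ih =>
    rw [← (Fin.snocEquiv fun _ => Fin n).sum_comp, Fintype.sum_prod_type, Finset.sum_comm]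
    have hsnoc : ∀ (w : Fin (t + 1) → Fin n) (j : Fin n),
        walkProb φ M (Fin.snoc w j : Fin (t + 2) → Fin n)
            * (∏ i : Fin (t + 2), E i ((Fin.snoc w j : Fin (t + 2) → Fin n) i))
            * g ((Fin.snoc w j : Fin (t + 2) → Fin n) (Fin.last (t + 1)))
          = walkProb φ M w * (∏ i : Fin (t + 1), E i (w i))
              * (M (w (Fin.last t)) j * E (t + 1) j * g j) := by
      intro w j
      simp only [walkProb_snoc, Fin.prod_univ_castSucc (n := t + 1), Fin.snoc_castSucc,
        Fin.snoc_last, Fin.val_castSucc, Fin.val_last]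
      ring
    calc _ = ∑ w : Fin (t + 1) → Fin n, walkProb φ M w * (∏ i : Fin (t + 1), E i (w i))
          * ∑ j, M (w (Fin.last t)) j * E (t + 1) j * g j := by
          refine Finset.sum_congr rfl fun w _ => ?_
          rw [Finset.mul_sum]
          exact Finset.sum_congr rfl fun j _ => hsnoc w j
      _ = ∑ i, tiltedVec M φ E t i * ∑ j, M i j * E (t + 1) j * g j :=
          ih fun i => ∑ j, M i j * E (t + 1) j * g j
      _ = ∑ j, tiltedVec M φ E (t + 1) j * g j := by
          simp only [tiltedVec, Pi.mul_apply, vecMul, dotProduct, Finset.mul_sum, Finset.sum_mul]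
          rw [Finset.sum_comm]
          simp only [mul_assoc]

open Fin.NatCast in
lemma sum_walkProb_mul_exp_eq {t : ℕ} (M : Matrix (Fin n) (Fin n) ℝ) (φ : Fin n → ℝ)
    (f : Fin (t + 1) → Fin n → ℝ) (r : ℝ) :
    ∑ v : Fin (t + 1) → Fin n, walkProb φ M v * exp (-(r * ∑ i, f i (v i)))
      = ∑ j, tiltedVec M φ (fun k j => exp (-(r * f (k : Fin (t + 1)) j))) t j := by
  have h := sum_walkProb_mul_prod_mul M φ (fun k j => exp (-(r * f (k : Fin (t + 1)) j))) t 1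
  simp only [Pi.one_apply, mul_one] at h
  rw [← h]
  refine Finset.sum_congr rfl fun v _ => ?_
  simp only [Fin.cast_val_eq_self, ← Real.exp_sum, Finset.mul_sum, Finset.sum_neg_distrib]

/-- The potential `|∑ u| + γ ‖u^⊥‖_π` of the tilted vector decays by `B` per step. -/
lemma sum_tiltedVec_le (hM : IsStochastic M) (hπd : IsDist π) (hπ : ∀ i, 0 < π i)
    (hπM : π ᵥ* M = π) {φ : Fin n → ℝ} (hφ : IsDist φ) {E : ℕ → Fin n → ℝ}
    (hE0 : ∀ k j, 0 ≤ E k j) (hE1 : ∀ k j, E k j ≤ 1) {m ν γ B : ℝ}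
    (hν : ∀ k, piNorm π (π * (1 - E k)) ≤ ν) (hm : ∀ k, ∑ j, π j * E k j ≤ m)
    (hγ : 0 ≤ γ) (hB : 0 ≤ B) (hmB : m + γ * ν ≤ B) (hρB : specExp π M * (ν + γ) ≤ B * γ)
    (t : ℕ) : ∑ j, tiltedVec M φ E t j ≤ B ^ t * (1 + γ * piNorm π φ) := by
  have hE : ∀ k j, |E k j| ≤ 1 := fun k j => abs_le.2 ⟨by linarith [hE0 k j], hE1 k j⟩
  have hpot := add_mul_le_pow_mul (a := fun k => |∑ j, tiltedVec M φ E k j|)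
    (b := fun k => piNorm π (perpComp π (tiltedVec M φ E k))) (fun _ => abs_nonneg _)
    (fun _ => piNorm_nonneg _) hγ hB hmB hρB
    (fun k => abs_sum_vecMul_mul_le hM hπd hπ hπM _ (hE0 (k + 1)) (hν (k + 1)) (hm (k + 1)))
    (fun k => piNorm_perpComp_vecMul_mul_le hM hπd hπ hπM _ (hE (k + 1)) (hν (k + 1))) t
  have ha0 : |∑ j, φ j * E 0 j| ≤ 1 := by
    rw [abs_of_nonneg (Finset.sum_nonneg fun j _ => mul_nonneg (hφ.1 j) (hE0 0 j)), ← hφ.2]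
    exact Finset.sum_le_sum fun j _ => mul_le_of_le_one_right (hφ.1 j) (hE1 0 j)
  have hb0 : piNorm π (perpComp π (φ * E 0)) ≤ piNorm π φ :=
    (piNorm_perpComp_le hπ hπd _).trans (piNorm_mul_le_of_abs_le (fun i => (hπ i).le) _ (hE 0))
  calc ∑ j, tiltedVec M φ E t j
      ≤ |∑ j, tiltedVec M φ E t j| + γ * piNorm π (perpComp π (tiltedVec M φ E t)) :=
        (le_abs_self _).trans (le_add_of_nonneg_right (mul_nonneg hγ (piNorm_nonneg _)))
    _ ≤ B ^ t * (|∑ j, φ j * E 0 j| + γ * piNorm π (perpComp π (φ * E 0))) := hpot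
    _ ≤ B ^ t * (1 + γ * piNorm π φ) := by gcongr

end TiltedWalk

lemma exp_neg_mul_le {r s : ℝ} (hr0 : 0 ≤ r) (hr1 : r ≤ 1) (hs0 : 0 ≤ s) (hs1 : s ≤ 1) :
    exp (-(r * s)) ≤ 1 - r * (1 - r) * s := by
  have hrs : |-(r * s)| ≤ 1 := by
    rw [abs_neg, abs_of_nonneg (mul_nonneg hr0 hs0)]
    nlinarith
  have h := (abs_le.1 (Real.abs_exp_sub_one_sub_id_le hrs)).2
  nlinarith [mul_nonneg (mul_nonneg hr0 hr0) (mul_nonneg hs0 (sub_nonneg.2 hs1))]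

lemma exp_neg_mul_add_le {x r δ : ℝ} (hx0 : 0 ≤ x) (hx1 : x ≤ 1 / 2) (hr0 : 0 ≤ r) (hr : r ≤ δ / 6)
    (hδ : 0 ≤ δ) : exp (-(x * (1 - r))) + x * δ / 4 ≤ exp (-(x * (1 - 2 * δ / 3))) := by
  have hsplit :
      exp (-(x * (1 - 2 * δ / 3))) = exp (-(x * (1 - r))) * exp (x * (2 * δ / 3 - r)) := by
    rw [← Real.exp_add]; ring_nf
  have hm : 1 / 2 ≤ exp (-(x * (1 - r))) := by
    nlinarith [Real.add_one_le_exp (-(x * (1 - r))), mul_nonneg hx0 hr0]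
  have hgrow : 1 + x * δ / 2 ≤ exp (x * (2 * δ / 3 - r)) := by
    nlinarith [Real.add_one_le_exp (x * (2 * δ / 3 - r))]
  rw [hsplit]
  nlinarith [mul_nonneg hx0 hδ]

lemma mul_add_le_mul_of_exp_neg_le {ρ ε δ s B : ℝ} (hρ : ρ ≤ 1 - ε) (hε : 0 ≤ ε) (hδ : 0 ≤ δ)
    (hs : 0 ≤ s) (hB : exp (-(ε / 3)) ≤ B) :
    ρ * (δ * ε / 6 * s + δ * s / 4) ≤ B * (δ * s / 4) := by
  have hρB : ρ * (1 + 2 * ε / 3) ≤ B := by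
    nlinarith [Real.add_one_le_exp (-(ε / 3))]
  have hds : 0 ≤ δ * s / 4 := by positivity
  calc ρ * (δ * ε / 6 * s + δ * s / 4) = ρ * (1 + 2 * ε / 3) * (δ * s / 4) := by ring
    _ ≤ B * (δ * s / 4) := mul_le_mul_of_nonneg_right hρB hds

lemma exp_mul_mul_exp_pow_le {ε μ δ : ℝ} (hε0 : 0 ≤ ε) (hε1 : ε ≤ 1) (hμ0 : 0 ≤ μ)
    (hμ1 : μ ≤ 1) (hδ0 : 0 ≤ δ) (hδ1 : δ ≤ 1) (t : ℕ) :
    exp (δ * ε / 6 * ((1 - δ) * (μ * (t + 1)))) * exp (-(δ * ε / 6 * μ * (1 - 2 * δ / 3))) ^ t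
      ≤ 3 * exp (-(δ ^ 2 * ε * μ * (t + 1) / 36)) := by
  have hx0 : 0 ≤ δ * ε / 6 * μ := by positivity
  have hx1 : δ * ε / 6 * μ ≤ 1 := by nlinarith [mul_le_one₀ hδ1 hε0 hε1, mul_nonneg hδ0 hε0]
  have hdecay : 0 ≤ δ ^ 2 * ε * μ * (t + 1) := by positivity
  rw [← Real.exp_nat_mul, ← Real.exp_add]
  calc _ ≤ exp (1 + -(δ ^ 2 * ε * μ * (t + 1) / 36)) :=
        Real.exp_le_exp.2 (by nlinarith [mul_nonneg hx0 hδ0])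
    _ ≤ _ := by
        rw [Real.exp_add]
        gcongr
        exact Real.exp_one_lt_three.le

lemma sum_filter_le_exp_mul_sum {α : Type*} [Fintype α] {p : α → ℝ} (hp : ∀ a, 0 ≤ p a)
    (X : α → ℝ) {r : ℝ} (hr : 0 ≤ r) (c : ℝ) :
    ∑ a ∈ Finset.univ.filter (fun a => X a ≤ c), p a
      ≤ exp (r * c) * ∑ a, p a * exp (-(r * X a)) := by
  rw [Finset.mul_sum]
  calc _ ≤ ∑ a ∈ Finset.univ.filter (fun a => X a ≤ c),
        exp (r * c) * (p a * exp (-(r * X a))) := by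
        refine Finset.sum_le_sum fun a ha => ?_
        have hX := (Finset.mem_filter.1 ha).2
        have h1 : 1 ≤ exp (r * c) * exp (-(r * X a)) := by
          rw [← Real.exp_add]
          exact Real.one_le_exp (by nlinarith)
        nlinarith [hp a]
    _ ≤ _ := Finset.sum_le_sum_of_subset_of_nonneg (Finset.filter_subset _ _) fun a _ _ =>
        mul_nonneg (Real.exp_pos _).le (mul_nonneg (hp a) (Real.exp_pos _).le)

section ExpWeights

variable {n : ℕ} {π : Fin n → ℝ} {f : Fin n → ℝ} {μ : ℝ}

lemma le_one_of_sum_mul_eq (hπd : IsDist π) (hf : ∀ j, 0 ≤ f j ∧ f j ≤ 1)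
    (hfμ : ∑ j, f j * π j = μ) : μ ≤ 1 := by
  rw [← hfμ, ← hπd.2]
  exact Finset.sum_le_sum fun j _ => mul_le_of_le_one_left (hπd.1 j) (hf j).2

lemma sum_mul_exp_neg_mul_le (hπd : IsDist π) (hf : ∀ j, 0 ≤ f j ∧ f j ≤ 1)
    (hfμ : ∑ j, f j * π j = μ) {r : ℝ} (hr0 : 0 ≤ r) (hr1 : r ≤ 1) :
    ∑ j, π j * exp (-(r * f j)) ≤ exp (-(r * μ * (1 - r))) :=
  calc ∑ j, π j * exp (-(r * f j)) ≤ ∑ j, π j * (1 - r * (1 - r) * f j) :=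
        Finset.sum_le_sum fun j _ =>
          mul_le_mul_of_nonneg_left (exp_neg_mul_le hr0 hr1 (hf j).1 (hf j).2) (hπd.1 j)
    _ = 1 - r * (1 - r) * μ := by
        simp only [mul_sub, mul_one, Finset.sum_sub_distrib, hπd.2, ← hfμ, Finset.mul_sum]
        exact congrArg _ (Finset.sum_congr rfl fun j _ => by ring)
    _ ≤ exp (-(r * μ * (1 - r))) := by linarith [Real.add_one_le_exp (-(r * μ * (1 - r)))]

lemma piNorm_mul_one_sub_exp_le (hπ : ∀ i, 0 < π i) (hf : ∀ j, 0 ≤ f j ∧ f j ≤ 1)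
    (hfμ : ∑ j, f j * π j = μ) {r : ℝ} (hr : 0 ≤ r) :
    piNorm π (π * (1 - fun j => exp (-(r * f j)))) ≤ r * √μ := by
  have hterm : ∀ j, (π j * (1 - exp (-(r * f j)))) ^ 2 / π j ≤ r ^ 2 * (f j * π j) := by
    intro j
    have h0 : 0 ≤ 1 - exp (-(r * f j)) := by
      simpa using Real.exp_le_one_iff.2 (neg_nonpos.2 (mul_nonneg hr (hf j).1))
    have h1 : 1 - exp (-(r * f j)) ≤ r * f j := by linarith [Real.add_one_le_exp (-(r * f j))]
    have hsq : (1 - exp (-(r * f j))) ^ 2 ≤ r ^ 2 * f j :=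
      calc (1 - exp (-(r * f j))) ^ 2 ≤ (r * f j) ^ 2 := pow_le_pow_left₀ h0 h1 2
        _ = r ^ 2 * (f j * f j) := by ring
        _ ≤ r ^ 2 * f j :=
          mul_le_mul_of_nonneg_left (mul_le_of_le_one_right (hf j).1 (hf j).2) (sq_nonneg r)
    rw [mul_pow, sq (π j), mul_assoc, mul_div_cancel_left₀ _ (hπ j).ne']
    linarith [mul_le_mul_of_nonneg_left hsq (hπ j).le]
  calc piNorm π (π * (1 - fun j => exp (-(r * f j))))
      ≤ √(∑ j, r ^ 2 * (f j * π j)) := Real.sqrt_le_sqrt (Finset.sum_le_sum fun j _ => hterm j)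
    _ = r * √μ := by rw [← Finset.mul_sum, hfμ, Real.sqrt_mul (sq_nonneg r), Real.sqrt_sq hr]

end ExpWeights

section Chernoff

variable {n : ℕ} {π : Fin n → ℝ} {M : Matrix (Fin n) (Fin n) ℝ}

lemma walkProb_nonneg (hM : IsStochastic M) {φ : Fin n → ℝ} (hφ : IsDist φ) {t : ℕ}
    (v : Fin (t + 1) → Fin n) : 0 ≤ walkProb φ M v :=
  mul_nonneg (hφ.1 _) (Finset.prod_nonneg fun _ _ => hM.1 _ _)

open Fin.NatCast in
lemma sum_walkProb_mul_exp_le (hM : IsStochastic M) (hπd : IsDist π) (hπ : ∀ i, 0 < π i)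
    (hπM : π ᵥ* M = π) {φ : Fin n → ℝ} (hφ : IsDist φ) {ε : ℝ} (hε0 : 0 < ε)
    (hε : specExp π M ≤ 1 - ε) {t : ℕ} {f : Fin (t + 1) → Fin n → ℝ}
    (hf : ∀ i j, 0 ≤ f i j ∧ f i j ≤ 1) {μ : ℝ} (hμ : 0 < μ) (hfμ : ∀ i, ∑ j, f i j * π j = μ)
    {δ : ℝ} (hδ0 : 0 ≤ δ) (hδ1 : δ ≤ 1) :
    ∑ v : Fin (t + 1) → Fin n, walkProb φ M v * exp (-(δ * ε / 6 * ∑ i, f i (v i)))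
      ≤ exp (-(δ * ε / 6 * μ * (1 - 2 * δ / 3))) ^ t * (2 * piNorm π φ) := by
  set r := δ * ε / 6 with hr
  have hε1 : ε ≤ 1 := by linarith [specExp_nonneg (π := π) (M := M)]
  have hμ1 : μ ≤ 1 := le_one_of_sum_mul_eq hπd (hf 0) (hfμ 0)
  have hr0 : 0 ≤ r := by positivity
  have hrδ : r ≤ δ / 6 := by nlinarith
  have hrε : r ≤ ε / 6 := by nlinarith
  have hx : r * μ ≤ r := mul_le_of_le_one_right hr0 hμ1
  have hsqrt : √μ * √μ = μ := Real.mul_self_sqrt hμ.le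
  have hmB : exp (-(r * μ * (1 - r))) + δ * √μ / 4 * (r * √μ)
      ≤ exp (-(r * μ * (1 - 2 * δ / 3))) := by
    have h := exp_neg_mul_add_le (mul_nonneg hr0 hμ.le) (by linarith) hr0 hrδ hδ0
    linarith [show δ * √μ / 4 * (r * √μ) = r * μ * δ / 4 by linear_combination (δ * r / 4) * hsqrt]
  have hρB : specExp π M * (r * √μ + δ * √μ / 4)
      ≤ exp (-(r * μ * (1 - 2 * δ / 3))) * (δ * √μ / 4) :=
    mul_add_le_mul_of_exp_neg_le hε hε0.le hδ0 (Real.sqrt_nonneg μ)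
      (Real.exp_le_exp.2 (by nlinarith [mul_nonneg (mul_nonneg hr0 hμ.le) hδ0]))
  rw [sum_walkProb_mul_exp_eq]
  calc _ ≤ exp (-(r * μ * (1 - 2 * δ / 3))) ^ t * (1 + δ * √μ / 4 * piNorm π φ) :=
        sum_tiltedVec_le hM hπd hπ hπM hφ
          (E := fun k j => exp (-(r * f (k : Fin (t + 1)) j))) (fun _ _ => (Real.exp_pos _).le)
          (fun _ j => Real.exp_le_one_iff.2 (neg_nonpos.2 (mul_nonneg hr0 (hf _ j).1)))
          (fun _ => piNorm_mul_one_sub_exp_le hπ (hf _) (hfμ _) hr0)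
          (fun _ => sum_mul_exp_neg_mul_le hπd (hf _) (hfμ _) hr0 (by linarith))
          (by positivity) (Real.exp_pos _).le hmB hρB t
    _ ≤ _ := by
        have hφ1 := one_le_piNorm hπ hπd hφ
        have hγ : δ * √μ / 4 ≤ 1 := by nlinarith [Real.sqrt_le_one.2 hμ1, Real.sqrt_nonneg μ]
        gcongr
        nlinarith

end Chernoff

theorem stmt_17 :
    ∃ c : ℝ, 0 < c ∧
      ∀ (n t : ℕ) (M : Matrix (Fin n) (Fin n) ℝ) (π : Fin n → ℝ),
        IsStochastic M → IsDist π → (∀ i, 0 < π i) → π ᵥ* M = π →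
        specExp π M < 1 →
        ∀ φ : Fin n → ℝ, IsDist φ →
        ∀ f : Fin (t + 1) → Fin n → ℝ, (∀ i j, 0 ≤ f i j ∧ f i j ≤ 1) →
        ∀ μ : ℝ, 0 < μ → (∀ i, ∑ j, f i j * π j = μ) →
        ∀ δ : ℝ, 0 ≤ δ → δ ≤ 1 →
          ∑ v ∈ Finset.univ.filter (fun v : Fin (t + 1) → Fin n =>
              ∑ i, f i (v i) ≤ (1 - δ) * (μ * (t + 1))), walkProb φ M v ≤
            c * piNorm π φ *
              Real.exp (-(δ ^ 2 * (1 - specExp π M) * μ * (t + 1) / 36)) := by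
  refine ⟨6, by norm_num, ?_⟩
  intro n t M π hM hπd hπ hπM hρ φ hφ f hf μ hμ hfμ δ hδ0 hδ1
  set ε := 1 - specExp π M with hε
  have hε0 : 0 < ε := sub_pos.2 hρ
  have hε1 : ε ≤ 1 := by linarith [specExp_nonneg (π := π) (M := M)]
  have hμ1 : μ ≤ 1 := le_one_of_sum_mul_eq hπd (hf 0) (hfμ 0)
  have hφ0 : 0 ≤ 2 * piNorm π φ := by linarith [one_le_piNorm hπ hπd hφ]
  calc _ ≤ exp (δ * ε / 6 * ((1 - δ) * (μ * (t + 1))))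
        * ∑ v, walkProb φ M v * exp (-(δ * ε / 6 * ∑ i, f i (v i))) :=
        sum_filter_le_exp_mul_sum (walkProb_nonneg hM hφ) _ (by positivity) _
    _ ≤ exp (δ * ε / 6 * ((1 - δ) * (μ * (t + 1))))
        * (exp (-(δ * ε / 6 * μ * (1 - 2 * δ / 3))) ^ t * (2 * piNorm π φ)) := by
        gcongr
        exact sum_walkProb_mul_exp_le hM hπd hπ hπM hφ hε0 (by linarith) hf hμ hfμ hδ0 hδ1
    _ ≤ 3 * exp (-(δ ^ 2 * ε * μ * (t + 1) / 36)) * (2 * piNorm π φ) := by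
        rw [← mul_assoc]
        exact mul_le_mul_of_nonneg_right
          (exp_mul_mul_exp_pow_le hε0.le hε1 hμ.le hμ1 hδ0 hδ1 t) hφ0
    _ = 6 * piNorm π φ * exp (-(δ ^ 2 * ε * μ * (t + 1) / 36)) := by ring
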